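/- arXiv:2503.22332 — 2 statements merged into one kernel-verified Lean document; each statement's English description precedes it below -/
import Mathlib

section
/- Let P be a nonzero sdf-absorbing strong C-hyperideal of a commutative multiplicative hyperring H with identity 1 such that 1 + 1 is a unit of H. Then P is a prime hyperideal of H. -/
open Pointwise

/-- A commutative multiplicative hyperring structure on an abelian group `H`. -/
structure MulHyperring (H : Type*) [AddCommGroup H] where
  hmul : H → H → Set H
  hmul_nonempty : ∀ x y : H, (hmul x y).Nonempty
  hmul_comm : ∀ x y : H, hmul x y = hmul y x
  hmul_assoc : ∀ x y z : H, (⋃ a ∈ hmul y z, hmul x a) = ⋃ b ∈ hmul x y, hmul b z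
  hmul_distrib : ∀ x y z : H, hmul x (y + z) ⊆ hmul x y + hmul x z
  hmul_neg : ∀ x y : H, hmul x (-y) = -(hmul x y)

namespace Hyper

variable {H : Type*} [AddCommGroup H] (mul : H → H → Set H)

/-- `P` is a hyperideal. -/
def IsIdeal (P : Set H) : Prop :=
  (0 : H) ∈ P ∧ (∀ x ∈ P, ∀ y ∈ P, x - y ∈ P) ∧ ∀ r : H, ∀ x ∈ P, mul r x ⊆ P

/-- Hyperproduct `a ∘ b₁ ∘ ⋯ ∘ bₙ`. -/
def hprod : H → List H → Set H
  | a, [] => {a}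
  | a, b :: l => ⋃ t ∈ mul a b, hprod t l

/-- `C` is a finite hyperproduct `c₁ ∘ ⋯ ∘ cₙ`. -/
def IsProduct (C : Set H) : Prop := ∃ (a : H) (l : List H), C = hprod mul a l

/-- `D` is a finite (nonempty) sum of finite hyperproducts. -/
def IsSum (D : Set H) : Prop :=
  ∃ L : List (Set H), L ≠ [] ∧ (∀ C ∈ L, IsProduct mul C) ∧ D = L.sum

/-- `P` is a `𝒞`-hyperideal. -/
def IsCIdeal (P : Set H) : Prop :=
  IsIdeal mul P ∧ ∀ C : Set H, IsProduct mul C → (C ∩ P).Nonempty → C ⊆ P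

/-- `P` is a strong `𝒞`-hyperideal. -/
def IsStrongCIdeal (P : Set H) : Prop :=
  IsIdeal mul P ∧ ∀ D : Set H, IsSum mul D → (D ∩ P).Nonempty → D ⊆ P

/-- The hypersquare `x² = x ∘ x`. -/
def sq (x : H) : Set H := mul x x

/-- `P` is an sdf-absorbing hyperideal. -/
def IsSdf (P : Set H) : Prop :=
  IsIdeal mul P ∧ P ≠ Set.univ ∧
    ∀ x y : H, x ≠ 0 → y ≠ 0 → sq mul x - sq mul y ⊆ P → x - y ∈ P ∨ x + y ∈ P

/-- `P` is a weakly sdf-absorbing hyperideal. -/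
def IsWeaklySdf (P : Set H) : Prop :=
  IsIdeal mul P ∧ P ≠ Set.univ ∧
    ∀ x y : H, x ≠ 0 → y ≠ 0 → (0 : H) ∉ sq mul x - sq mul y →
      sq mul x - sq mul y ⊆ P → x - y ∈ P ∨ x + y ∈ P

/-- `P` is a prime hyperideal. -/
def IsPrime (P : Set H) : Prop :=
  IsIdeal mul P ∧ P ≠ Set.univ ∧ ∀ x y : H, mul x y ⊆ P → x ∈ P ∨ y ∈ P

/-- The radical: intersection of the prime hyperideals containing `P`. -/
def rad (P : Set H) : Set H := ⋂₀ {Q : Set H | IsPrime mul Q ∧ P ⊆ Q}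

/-- `hpow mul x n` is the hyperpower `x^(n+1)`. -/
def hpow (x : H) (n : ℕ) : Set H := hprod mul x (List.replicate n x)

/-- `x` is nilpotent: `0 ∈ xⁿ` for some `n`. -/
def IsNilpotent (x : H) : Prop := ∃ n : ℕ, (0 : H) ∈ hpow mul x n

/-- `x` is a regular element: `x ∈ x² ∘ y` for some `y`. -/
def IsRegularElem (x : H) : Prop := ∃ y : H, x ∈ ⋃ t ∈ sq mul x, mul t y

/-- The hyperideal generated by a set `S`. -/
def span (S : Set H) : Set H := ⋂₀ {Q : Set H | IsIdeal mul Q ∧ S ⊆ Q}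

/-- `P` is a maximal hyperideal. -/
def IsMaximal (P : Set H) : Prop :=
  IsIdeal mul P ∧ P ≠ Set.univ ∧
    ∀ B : Set H, IsIdeal mul B → P ⊆ B → B = P ∨ B = Set.univ

end Hyper

/-- Componentwise hypermultiplication on a product. -/
def prodMul {H₁ H₂ : Type*} (m₁ : H₁ → H₁ → Set H₁) (m₂ : H₂ → H₂ → Set H₂) :
    H₁ × H₂ → H₁ × H₂ → Set (H₁ × H₂) :=
  fun a b => (m₁ a.1 b.1) ×ˢ (m₂ a.2 b.2)

/-!
If `x ∘ y ⊆ P` with `x`, `y`, `x ± y` nonzero, then `(x + y)² - (x - y)²` lies in a sum of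
hyperproducts meeting `P` (at `4q` for `q ∈ x ∘ y`), hence in `P`; sdf-absorption yields
`x + x ∈ P` or `y + y ∈ P`, and halving is possible because `e + e` is a unit and `P` is a
strong `𝒞`-hyperideal. When `x = ±y` we have `x² ⊆ P`, and sdf-absorption of `x² - p²` for a
nonzero `p ∈ P` gives `x ∈ P`.
-/

namespace MulHyperring

variable {H : Type*} [AddCommGroup H] (M : MulHyperring H)

theorem neg_hmul (a b : H) : M.hmul (-a) b = -M.hmul a b := by
  rw [M.hmul_comm, M.hmul_neg, M.hmul_comm]

theorem neg_hmul_neg (a b : H) : M.hmul (-a) (-b) = M.hmul a b := by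
  rw [neg_hmul, hmul_neg, neg_neg]

theorem add_hmul_subset (a b c : H) : M.hmul (a + b) c ⊆ M.hmul a c + M.hmul b c := by
  simpa only [M.hmul_comm _ c] using M.hmul_distrib c a b

theorem add_hmul_add_subset (a b c d : H) :
    M.hmul (a + b) (c + d) ⊆ M.hmul a c + M.hmul a d + (M.hmul b c + M.hmul b d) :=
  (M.add_hmul_subset a b (c + d)).trans
    (Set.add_subset_add (M.hmul_distrib a c d) (M.hmul_distrib b c d))

theorem neg_hprod (a : H) (l : List H) :
    -Hyper.hprod M.hmul a l = Hyper.hprod M.hmul (-a) l := by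
  induction l generalizing a with
  | nil => simp [Hyper.hprod]
  | cons b l ih =>
    ext z
    simp [Hyper.hprod, neg_hmul, ← ih]

end MulHyperring

namespace Hyper

variable {H : Type*}

theorem hprod_singleton (mul : H → H → Set H) (a b : H) : hprod mul a [b] = mul a b := by
  simp [hprod]

theorem isProduct_mul (mul : H → H → Set H) (a b : H) : IsProduct mul (mul a b) :=
  ⟨a, [b], (hprod_singleton mul a b).symm⟩

variable [AddCommGroup H]

theorem IsProduct.isSum {mul : H → H → Set H} {C : Set H} (hC : IsProduct mul C) :
    IsSum mul C :=
  ⟨[C], List.cons_ne_nil _ _, by simpa using hC, by simp⟩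

theorem IsSum.add {mul : H → H → Set H} {D₁ D₂ : Set H} (h₁ : IsSum mul D₁)
    (h₂ : IsSum mul D₂) : IsSum mul (D₁ + D₂) := by
  obtain ⟨L₁, hL₁, hC₁, rfl⟩ := h₁
  obtain ⟨L₂, -, hC₂, rfl⟩ := h₂
  refine ⟨L₁ ++ L₂, by simp [hL₁], ?_, List.sum_append.symm⟩
  simpa [or_imp, forall_and] using ⟨hC₁, hC₂⟩

theorem IsSum.neg {M : MulHyperring H} {D : Set H} (h : IsSum M.hmul D) :
    IsSum M.hmul (-D) := by
  obtain ⟨L, hL, hC, rfl⟩ := h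
  refine ⟨L.map (-·), by simpa using hL, ?_, List.sum_neg L⟩
  simp only [List.mem_map, forall_exists_index, and_imp, forall_apply_eq_imp_iff₂]
  intro C hCL
  obtain ⟨a, l, rfl⟩ := hC C hCL
  exact ⟨-a, l, M.neg_hprod a l⟩

theorem IsSum.sub {M : MulHyperring H} {D₁ D₂ : Set H} (h₁ : IsSum M.hmul D₁)
    (h₂ : IsSum M.hmul D₂) : IsSum M.hmul (D₁ - D₂) := by
  simpa only [sub_eq_add_neg] using h₁.add h₂.neg

namespace IsIdeal

variable {mul : H → H → Set H} {P : Set H}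

theorem neg_mem (hP : IsIdeal mul P) {a : H} (ha : a ∈ P) : -a ∈ P := by
  simpa using hP.2.1 0 hP.1 a ha

theorem add_mem (hP : IsIdeal mul P) {a b : H} (ha : a ∈ P) (hb : b ∈ P) : a + b ∈ P := by
  simpa using hP.2.1 a ha (-b) (hP.neg_mem hb)

theorem sub_subset (hP : IsIdeal mul P) {A B : Set H} (hA : A ⊆ P) (hB : B ⊆ P) :
    A - B ⊆ P := by
  rintro _ ⟨a, ha, b, hb, rfl⟩
  exact hP.2.1 a (hA ha) b (hB hb)

end IsIdeal

theorem IsSdf.mem_of_sq_subset {mul : H → H → Set H} {P : Set H} (hsdf : IsSdf mul P)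
    (hP0 : P ≠ {0}) {x : H} (hx0 : x ≠ 0) (hx : sq mul x ⊆ P) : x ∈ P := by
  have hI := hsdf.1
  obtain ⟨p, hpP, hp0⟩ : ∃ p ∈ P, p ≠ 0 := by
    by_contra! h
    exact hP0 (Set.eq_singleton_iff_unique_mem.mpr ⟨hI.1, h⟩)
  rcases hsdf.2.2 x p hx0 hp0 (hI.sub_subset hx (hI.2.2 p p hpP)) with h | h
  · simpa using hI.add_mem h hpP
  · simpa using hI.2.1 _ h p hpP

namespace IsStrongCIdeal

variable {M : MulHyperring H} {P : Set H}

/-- With `T = x ∘ e ∘ v`, where `v` inverts `e + e`, both `x` and `v ∘ (x + x) ⊆ P` lie in the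
sum `T + T`. -/
theorem mem_of_add_self_mem (hS : IsStrongCIdeal M.hmul P) {e : H}
    (he : ∀ x : H, x ∈ M.hmul x e) (hunit : ∃ v : H, e ∈ M.hmul (e + e) v) {x : H}
    (hx : x + x ∈ P) : x ∈ P := by
  obtain ⟨v, hv⟩ := hunit
  set T : Set H := hprod M.hmul x [e, v] with hT
  have hT_eq : T = ⋃ t ∈ M.hmul x e, M.hmul t v := by simp [hT, hprod]
  have hmem_T : ∀ {t s : H}, t ∈ M.hmul x e → s ∈ M.hmul v t → s ∈ T := fun ht hs => by
    rw [hT_eq]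
    exact Set.mem_biUnion ht (M.hmul_comm v _ ▸ hs)
  have hx_TT : x ∈ T + T := by
    have : x ∈ ⋃ b ∈ M.hmul x (e + e), M.hmul b v := by
      rw [← M.hmul_assoc]
      exact Set.mem_biUnion hv (he x)
    obtain ⟨b, hb, hxb⟩ := Set.mem_iUnion₂.mp this
    obtain ⟨a₁, ha₁, a₂, ha₂, rfl⟩ := M.hmul_distrib x e e hb
    rw [M.hmul_comm] at hxb
    obtain ⟨c₁, hc₁, c₂, hc₂, rfl⟩ := M.hmul_distrib v a₁ a₂ hxb
    exact Set.add_mem_add (hmem_T ha₁ hc₁) (hmem_T ha₂ hc₂)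
  obtain ⟨w, hw⟩ := M.hmul_nonempty v (x + x)
  have hw_TT : w ∈ T + T := by
    obtain ⟨c₁, hc₁, c₂, hc₂, rfl⟩ := M.hmul_distrib v x x hw
    exact Set.add_mem_add (hmem_T (he x) hc₁) (hmem_T (he x) hc₂)
  have hTT : IsSum M.hmul (T + T) := by
    have hT_prod : IsProduct M.hmul T := ⟨x, [e, v], rfl⟩
    exact hT_prod.isSum.add hT_prod.isSum
  exact hS.2 _ hTT ⟨w, hw_TT, hS.1.2.2 v _ hx hw⟩ hx_TT

/-- Expanding `(x + y)² - (x - y)²` gives a sum of hyperproducts containing `4q` for any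
`q ∈ x ∘ y`, so the strong `𝒞` property applies. -/
theorem sq_add_sub_sq_sub_subset (hS : IsStrongCIdeal M.hmul P) {x y : H}
    (hxy : M.hmul x y ⊆ P) : sq M.hmul (x + y) - sq M.hmul (x - y) ⊆ P := by
  set D : Set H := M.hmul x x + M.hmul x y + (M.hmul y x + M.hmul y y) -
    (M.hmul x x + M.hmul x (-y) + (M.hmul (-y) x + M.hmul (-y) (-y)))
  have hD_sum : IsSum M.hmul D := by
    have h := fun a b => (isProduct_mul M.hmul a b).isSum
    exact ((h _ _).add (h _ _) |>.add ((h _ _).add (h _ _))).sub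
      ((h _ _).add (h _ _) |>.add ((h _ _).add (h _ _)))
  obtain ⟨a, ha⟩ := M.hmul_nonempty x x
  obtain ⟨d, hd⟩ := M.hmul_nonempty y y
  obtain ⟨q, hq⟩ := M.hmul_nonempty x y
  have hq' : q ∈ M.hmul y x := M.hmul_comm x y ▸ hq
  have hD_meet : a + q + (q + d) - (a + -q + (-q + d)) ∈ D := by
    refine Set.sub_mem_sub (Set.add_mem_add (Set.add_mem_add ha hq) (Set.add_mem_add hq' hd))
      (Set.add_mem_add (Set.add_mem_add ha ?_) (Set.add_mem_add ?_ ?_))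
    · simpa [M.hmul_neg] using hq
    · simpa [M.neg_hmul] using hq'
    · simpa [M.neg_hmul_neg] using hd
  have hP_meet : a + q + (q + d) - (a + -q + (-q + d)) ∈ P := by
    have hq2 := hS.1.add_mem (hxy hq) (hxy hq)
    convert hS.1.add_mem hq2 hq2 using 1
    abel
  refine (Set.sub_subset_sub (M.add_hmul_add_subset x y x y) ?_).trans
    (hS.2 D hD_sum ⟨_, hD_meet, hP_meet⟩)
  simpa only [sq, sub_eq_add_neg] using M.add_hmul_add_subset x (-y) x (-y)

end IsStrongCIdeal

end Hyper

/-- a nonzero sdf-absorbing strong `𝒞`-hyperideal of a hyperring with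
identity `e` in which `e + e` is a unit is prime. -/
theorem stmt13 {H : Type*} [AddCommGroup H] (M : MulHyperring H) (e : H)
    (he : ∀ x : H, x ∈ M.hmul x e)
    (hunit : ∃ v : H, e ∈ M.hmul (e + e) v)
    (P : Set H) (hP0 : P ≠ ({0} : Set H))
    (hS : Hyper.IsStrongCIdeal M.hmul P) (hsdf : Hyper.IsSdf M.hmul P) :
    Hyper.IsPrime M.hmul P := by
  have hI := hS.1
  refine ⟨hI, hsdf.2.1, fun x y hxy => ?_⟩
  obtain rfl | hx0 := eq_or_ne x 0
  · exact Or.inl hI.1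
  obtain rfl | hy0 := eq_or_ne y 0
  · exact Or.inr hI.1
  obtain hsum | hsum := eq_or_ne (x + y) 0
  · obtain rfl := eq_neg_of_add_eq_zero_right hsum
    refine Or.inl (hsdf.mem_of_sq_subset hP0 hx0 fun a ha => neg_neg a ▸ hI.neg_mem (hxy ?_))
    rw [M.hmul_neg]
    exact Set.neg_mem_neg.mpr ha
  obtain rfl | hdiff := eq_or_ne x y
  · exact Or.inl (hsdf.mem_of_sq_subset hP0 hx0 hxy)
  rcases hsdf.2.2 _ _ hsum (sub_ne_zero.mpr hdiff) (hS.sq_add_sub_sq_sub_subset hxy) with h | h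
  · exact Or.inr (hS.mem_of_add_self_mem he hunit (by convert h using 1; abel))
  · exact Or.inl (hS.mem_of_add_self_mem he hunit (by convert h using 1; abel))
end

section
/- Let H₁, H₂ be commutative multiplicative hyperrings with identities, and P₁, P₂ nonzero proper strong C-hyperideals of H₁, H₂ respectively. Then P₁ × P₂ is an sdf-absorbing hyperideal of H₁ × H₂ if and only if P₁ and P₂ are sdf-absorbing hyperideals of H₁ and H₂ respectively, and 1_{H₁} + 1_{H₁} ∈ P₁ or 1_{H₂} + 1_{H₂} ∈ P₂. -/
/-!
Squares in `H₁ × H₂` are computed coordinatewise, so `x² - y² ⊆ P₁ × P₂` splits into the two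
coordinate conditions. Since `x² - x²` lies in any strong 𝒞-hyperideal, testing the product
against pairs `(x, b), (y, b)` with `b ≠ 0` recovers sdf-absorption of each factor, and the pair
`(1, 1), (-1, 1)`, whose squares agree, forces `1 + 1 ∈ P₁` or `1 + 1 ∈ P₂`. Conversely, in a
nonzero sdf-absorbing hyperideal the condition `x, y ≠ 0` can be dropped, and once `1 + 1 ∈ P₁`
every `a + a` lies in `P₁`, so `x₁ - y₁ ∈ P₁ ↔ x₁ + y₁ ∈ P₁`; then the alternatives in the two
coordinates combine.
-/

open Pointwise

namespace Hyper

theorem isProduct_hmul {H : Type*} (mul : H → H → Set H) (a b : H) :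
    IsProduct mul (mul a b) :=
  ⟨a, [b], by simp [hprod]⟩

section Factor

variable {H : Type*} [AddCommGroup H] {mul : H → H → Set H} {P : Set H}

theorem IsIdeal.neg_mem_s14 (hP : IsIdeal mul P) {a : H} (ha : a ∈ P) : -a ∈ P := by
  simpa using hP.2.1 0 hP.1 a ha

theorem IsIdeal.add_mem_s14 (hP : IsIdeal mul P) {a b : H} (ha : a ∈ P) (hb : b ∈ P) :
    a + b ∈ P := by
  simpa using hP.2.1 a ha (-b) (hP.neg_mem_s14 hb)

theorem IsIdeal.sub_subset_s14 (hP : IsIdeal mul P) {A B : Set H} (hA : A ⊆ P) (hB : B ⊆ P) :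
    A - B ⊆ P :=
  Set.sub_subset_iff.2 fun a ha b hb => hP.2.1 a (hA ha) b (hB hb)

theorem IsIdeal.sub_subset_comm (hP : IsIdeal mul P) {A B : Set H} (h : A - B ⊆ P) :
    B - A ⊆ P :=
  Set.sub_subset_iff.2 fun b hb a ha => by
    simpa using hP.neg_mem_s14 (h (Set.sub_mem_sub ha hb))

theorem IsIdeal.subset_of_sub_subset (hP : IsIdeal mul P) {A B : Set H} (h : A - B ⊆ P)
    (hB : B ⊆ P) (hBne : B.Nonempty) : A ⊆ P := fun a ha => by
  obtain ⟨b, hb⟩ := hBne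
  simpa using hP.add_mem_s14 (h (Set.sub_mem_sub ha hb)) (hB hb)

theorem IsIdeal.eq_univ_of_mem {e : H} (hP : IsIdeal mul P) (he : ∀ x : H, x ∈ mul x e)
    (heP : e ∈ P) : P = Set.univ :=
  Set.eq_univ_of_forall fun x => hP.2.2 x e heP (he x)

theorem IsIdeal.sub_mem_iff_add_mem (hP : IsIdeal mul P) (htwo : ∀ a : H, a + a ∈ P)
    (a b : H) : a - b ∈ P ↔ a + b ∈ P := by
  constructor
  · intro h
    simpa [sub_add_add_cancel] using hP.add_mem_s14 h (htwo b)
  · intro h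
    simpa using hP.2.1 _ h _ (htwo b)

theorem isSum_hmul_add_hmul (mul : H → H → Set H) (a b c d : H) :
    IsSum mul (mul a b + mul c d) :=
  ⟨[mul a b, mul c d], by simp, by simp [isProduct_hmul], by simp⟩

theorem IsStrongCIdeal.hmul_add_hmul_subset (hP : IsStrongCIdeal mul P) {a b c d : H}
    (h : ((mul a b + mul c d) ∩ P).Nonempty) : mul a b + mul c d ⊆ P :=
  hP.2 _ (isSum_hmul_add_hmul mul a b c d) h

theorem sq_neg (M : MulHyperring H) (a : H) : sq M.hmul (-a) = sq M.hmul a := by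
  unfold sq
  rw [M.hmul_neg, M.hmul_comm, M.hmul_neg, neg_neg]

theorem IsStrongCIdeal.sq_sub_sq_self_subset (M : MulHyperring H)
    (hP : IsStrongCIdeal M.hmul P) (a : H) : sq M.hmul a - sq M.hmul a ⊆ P := by
  have hsplit : sq M.hmul a - sq M.hmul a = M.hmul a a + M.hmul a (-a) := by
    rw [sq, M.hmul_neg, sub_eq_add_neg]
  -- `a ∘ a + a ∘ (-a)` is a sum of hyperproducts meeting `P` in `u + (-u) = 0`.
  obtain ⟨u, hu⟩ := M.hmul_nonempty a a
  have hneg : -u ∈ M.hmul a (-a) := by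
    rw [M.hmul_neg]
    exact Set.neg_mem_neg.2 hu
  rw [hsplit]
  refine hP.hmul_add_hmul_subset ⟨0, ?_, hP.1.1⟩
  simpa using Set.add_mem_add hu hneg

theorem IsStrongCIdeal.add_self_mem (M : MulHyperring H) (hP : IsStrongCIdeal M.hmul P)
    {e : H} (he : ∀ x : H, x ∈ M.hmul x e) (h2 : e + e ∈ P) (b : H) : b + b ∈ P := by
  obtain ⟨t, ht⟩ := M.hmul_nonempty b (e + e)
  exact hP.hmul_add_hmul_subset ⟨t, M.hmul_distrib b e e ht, hP.1.2.2 b (e + e) h2 ht⟩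
    (Set.add_mem_add (he b) (he b))

theorem IsSdf.mem_of_sq_subset_s14 (hP : IsSdf mul P) (h0 : P ≠ {0}) {y : H}
    (hy : sq mul y ⊆ P) : y ∈ P := by
  rcases eq_or_ne y 0 with rfl | hy0
  · exact hP.1.1
  obtain ⟨p, hp, hp0⟩ := ((Set.nontrivial_iff_ne_singleton hP.1.1).2 h0).exists_ne 0
  rcases hP.2.2 y p hy0 hp0 (hP.1.sub_subset_s14 hy (hP.1.2.2 p p hp)) with h | h
  · simpa using hP.1.add_mem_s14 h hp
  · simpa using hP.1.2.1 _ h _ hp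

theorem IsSdf.sub_mem_or_add_mem (M : MulHyperring H) (hP : IsSdf M.hmul P) (h0 : P ≠ {0})
    {x y : H} (h : sq M.hmul x - sq M.hmul y ⊆ P) : x - y ∈ P ∨ x + y ∈ P := by
  have hsq0 : sq M.hmul 0 ⊆ P := hP.1.2.2 0 0 hP.1.1
  rcases eq_or_ne x 0 with rfl | hx
  · have hsqy : sq M.hmul y ⊆ P :=
      hP.1.subset_of_sub_subset (hP.1.sub_subset_comm h) hsq0 (M.hmul_nonempty 0 0)
    left
    simpa using hP.1.neg_mem_s14 (hP.mem_of_sq_subset_s14 h0 hsqy)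
  rcases eq_or_ne y 0 with rfl | hy
  · have hsqx : sq M.hmul x ⊆ P :=
      hP.1.subset_of_sub_subset h hsq0 (M.hmul_nonempty 0 0)
    left
    simpa using hP.mem_of_sq_subset_s14 h0 hsqx
  exact hP.2.2 x y hx hy h

end Factor

section Product

variable {H₁ H₂ : Type*} [AddCommGroup H₁] [AddCommGroup H₂] {P₁ : Set H₁} {P₂ : Set H₂}

theorem IsIdeal.prod {m₁ : H₁ → H₁ → Set H₁} {m₂ : H₂ → H₂ → Set H₂}
    (h₁ : IsIdeal m₁ P₁) (h₂ : IsIdeal m₂ P₂) : IsIdeal (prodMul m₁ m₂) (P₁ ×ˢ P₂) :=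
  ⟨⟨h₁.1, h₂.1⟩, fun _ hx _ hy => ⟨h₁.2.1 _ hx.1 _ hy.1, h₂.2.1 _ hx.2 _ hy.2⟩,
    fun r x hx => Set.prod_mono (h₁.2.2 r.1 x.1 hx.1) (h₂.2.2 r.2 x.2 hx.2)⟩

theorem sq_sub_sq_subset_prod_iff (M₁ : MulHyperring H₁) (M₂ : MulHyperring H₂)
    (x y : H₁ × H₂) :
    sq (prodMul M₁.hmul M₂.hmul) x - sq (prodMul M₁.hmul M₂.hmul) y ⊆ P₁ ×ˢ P₂ ↔
      sq M₁.hmul x.1 - sq M₁.hmul y.1 ⊆ P₁ ∧ sq M₂.hmul x.2 - sq M₂.hmul y.2 ⊆ P₂ := by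
  change sq M₁.hmul x.1 ×ˢ sq M₂.hmul x.2 - sq M₁.hmul y.1 ×ˢ sq M₂.hmul y.2 ⊆ _ ↔ _
  rw [Set.prod_sub_prod_comm]
  exact Set.prod_subset_prod_iff' (((M₁.hmul_nonempty _ _).sub (M₁.hmul_nonempty _ _)).prod
    ((M₂.hmul_nonempty _ _).sub (M₂.hmul_nonempty _ _)))

variable {M₁ : MulHyperring H₁} {M₂ : MulHyperring H₂}

theorem IsSdf.of_prod_left (hP : IsSdf (prodMul M₁.hmul M₂.hmul) (P₁ ×ˢ P₂))
    (h₁ : IsIdeal M₁.hmul P₁) (h₁p : P₁ ≠ Set.univ) (h₂ : IsStrongCIdeal M₂.hmul P₂)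
    {b : H₂} (hb : b ≠ 0) : IsSdf M₁.hmul P₁ := by
  refine ⟨h₁, h₁p, fun x y hx hy hxy => ?_⟩
  have hsq := (sq_sub_sq_subset_prod_iff M₁ M₂ (x, b) (y, b)).2
    ⟨hxy, h₂.sq_sub_sq_self_subset M₂ b⟩
  exact (hP.2.2 (x, b) (y, b) (by simp [hb]) (by simp [hb]) hsq).imp And.left And.left

theorem IsSdf.of_prod_right (hP : IsSdf (prodMul M₁.hmul M₂.hmul) (P₁ ×ˢ P₂))
    (h₁ : IsStrongCIdeal M₁.hmul P₁) (h₂ : IsIdeal M₂.hmul P₂) (h₂p : P₂ ≠ Set.univ)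
    {a : H₁} (ha : a ≠ 0) : IsSdf M₂.hmul P₂ := by
  refine ⟨h₂, h₂p, fun x y hx hy hxy => ?_⟩
  have hsq := (sq_sub_sq_subset_prod_iff M₁ M₂ (a, x) (a, y)).2
    ⟨h₁.sq_sub_sq_self_subset M₁ a, hxy⟩
  exact (hP.2.2 (a, x) (a, y) (by simp [ha]) (by simp [ha]) hsq).imp And.right And.right

theorem IsSdf.add_self_mem_or_of_prod (hP : IsSdf (prodMul M₁.hmul M₂.hmul) (P₁ ×ˢ P₂))
    (h₁ : IsStrongCIdeal M₁.hmul P₁) (h₂ : IsStrongCIdeal M₂.hmul P₂) {a : H₁} (ha : a ≠ 0)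
    (b : H₂) : a + a ∈ P₁ ∨ b + b ∈ P₂ := by
  have hsq := (sq_sub_sq_subset_prod_iff (P₁ := P₁) (P₂ := P₂) M₁ M₂ (a, b) (-a, b)).2
    ⟨by simpa only [sq_neg] using h₁.sq_sub_sq_self_subset M₁ a,
      h₂.sq_sub_sq_self_subset M₂ b⟩
  rcases hP.2.2 (a, b) (-a, b) (by simp [ha]) (by simp [ha]) hsq with h | h
  · exact Or.inl (by simpa using h.1)
  · exact Or.inr (by simpa using h.2)

theorem IsSdf.prod (hs₁ : IsSdf M₁.hmul P₁) (hs₂ : IsSdf M₂.hmul P₂) (h₁0 : P₁ ≠ {0})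
    (h₂0 : P₂ ≠ {0}) (htwo : (∀ a : H₁, a + a ∈ P₁) ∨ ∀ b : H₂, b + b ∈ P₂) :
    IsSdf (prodMul M₁.hmul M₂.hmul) (P₁ ×ˢ P₂) := by
  refine ⟨hs₁.1.prod hs₂.1, fun h => hs₁.2.1 (Set.prod_eq_univ.1 h).1, fun x y _ _ hxy => ?_⟩
  obtain ⟨hxy₁, hxy₂⟩ := (sq_sub_sq_subset_prod_iff M₁ M₂ x y).1 hxy
  have h₁ := hs₁.sub_mem_or_add_mem M₁ h₁0 hxy₁
  have h₂ := hs₂.sub_mem_or_add_mem M₂ h₂0 hxy₂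
  simp only [Set.mem_prod, Prod.fst_sub, Prod.snd_sub, Prod.fst_add, Prod.snd_add]
  rcases htwo with htwo | htwo
  · have := hs₁.1.sub_mem_iff_add_mem htwo x.1 y.1
    tauto
  · have := hs₂.1.sub_mem_iff_add_mem htwo x.2 y.2
    tauto

end Product

end Hyper

/-- `P₁ × P₂` is sdf-absorbing in `H₁ × H₂` iff `P₁` and `P₂` are
sdf-absorbing and `1 + 1 ∈ P₁` or `1 + 1 ∈ P₂`. -/
theorem stmt14 {H₁ H₂ : Type*} [AddCommGroup H₁] [AddCommGroup H₂]
    (M₁ : MulHyperring H₁) (M₂ : MulHyperring H₂)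
    (e₁ : H₁) (he₁ : ∀ x : H₁, x ∈ M₁.hmul x e₁)
    (e₂ : H₂) (he₂ : ∀ x : H₂, x ∈ M₂.hmul x e₂)
    (P₁ : Set H₁) (P₂ : Set H₂)
    (h₁ : Hyper.IsStrongCIdeal M₁.hmul P₁) (h₁0 : P₁ ≠ ({0} : Set H₁))
    (h₁p : P₁ ≠ Set.univ)
    (h₂ : Hyper.IsStrongCIdeal M₂.hmul P₂) (h₂0 : P₂ ≠ ({0} : Set H₂))
    (h₂p : P₂ ≠ Set.univ) :
    Hyper.IsSdf (prodMul M₁.hmul M₂.hmul) (P₁ ×ˢ P₂) ↔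
      (Hyper.IsSdf M₁.hmul P₁ ∧ Hyper.IsSdf M₂.hmul P₂ ∧
        (e₁ + e₁ ∈ P₁ ∨ e₂ + e₂ ∈ P₂)) := by
  have he₁0 : e₁ ≠ 0 := fun h => h₁p (h₁.1.eq_univ_of_mem he₁ (h ▸ h₁.1.1))
  have he₂0 : e₂ ≠ 0 := fun h => h₂p (h₂.1.eq_univ_of_mem he₂ (h ▸ h₂.1.1))
  constructor
  · intro hP
    exact ⟨hP.of_prod_left h₁.1 h₁p h₂ he₂0, hP.of_prod_right h₁ h₂.1 h₂p he₁0,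
      hP.add_self_mem_or_of_prod h₁ h₂ he₁0 e₂⟩
  · rintro ⟨hs₁, hs₂, htwo⟩
    exact hs₁.prod hs₂ h₁0 h₂0 (htwo.imp (h₁.add_self_mem M₁ he₁) (h₂.add_self_mem M₂ he₂))
end
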